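/- Let A be a Grothendieck category with enough projectives. Suppose every projective object of A has an injective resolution of length at most n and every injective object of A has a projective resolution of length at most n. Then A is Gorenstein of Gorenstein dimension at most n; in particular, every object of finite projective dimension has injective dimension at most n and every object of finite injective dimension has projective dimension at most n. -/

import Mathlib

open CategoryTheory CategoryTheory.Limits

universe v u

namespace Stmt2

variable {A : Type u} [Category.{v} A] [Abelian A]

/-- `PdimLE n M` : `M` has projective dimension at most `n`
(i.e. it has a projective resolution of length at most `n`). -/
def PdimLE : ℕ → A → Prop
  | 0, M => Projective M
  | n + 1, M => Projective M ∨
      ∃ (K P : A) (i : K ⟶ P) (p : P ⟶ M) (w : i ≫ p = 0),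
        Projective P ∧ (ShortComplex.mk i p w).ShortExact ∧ PdimLE n K

/-- `IdimLE n M` : `M` has injective dimension at most `n`
(i.e. it has an injective resolution of length at most `n`). -/
def IdimLE : ℕ → A → Prop
  | 0, M => Injective M
  | n + 1, M => Injective M ∨
      ∃ (I K : A) (i : M ⟶ I) (p : I ⟶ K) (w : i ≫ p = 0),
        Injective I ∧ (ShortComplex.mk i p w).ShortExact ∧ IdimLE n K

/-- `M` has finite projective dimension. -/
def FinPdim (M : A) : Prop := ∃ n, PdimLE n M

/-- `M` has finite injective dimension. -/
def FinIdim (M : A) : Prop := ∃ n, IdimLE n M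

/-- An abelian category is *Gorenstein* if finiteness of projective dimension and of
injective dimension agree objectwise, the finitary projective and injective dimensions
are finite, and there is a generator of finite projective dimension. -/
def IsGorenstein (A : Type u) [Category.{v} A] [Abelian A] : Prop :=
  (∀ M : A, FinPdim M ↔ FinIdim M) ∧
  (∃ n : ℕ, (∀ M : A, FinPdim M → PdimLE n M) ∧ (∀ M : A, FinIdim M → IdimLE n M)) ∧
  (∃ G : A, IsSeparator G ∧ FinPdim G)

/-- Gorenstein with Gorenstein dimension at most `n`. -/
def IsGorensteinDimLE (A : Type u) [Category.{v} A] [Abelian A] (n : ℕ) : Prop :=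
  IsGorenstein A ∧
  (∀ M : A, FinPdim M → PdimLE n M) ∧ (∀ M : A, FinIdim M → IdimLE n M)

end Stmt2

/-
A Grothendieck category has enough injectives and `A` has enough projectives, so a bound on
the length of resolutions is the same as vanishing of `Ext` in high degrees
(`HasInjectiveDimensionLE`, `HasProjectiveDimensionLE`). The long exact `Ext`-sequence of
`K ↪ P ↠ M` bounds the injective dimension of `M` by those of `K` and `P`; by induction along
a finite projective resolution, every object of finite projective dimension has injective
dimension at most `n`, and dually. Applying the two bounds one after the other bounds the
finitary dimensions, and a projective object mapping epimorphically onto a separator is again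
a separator.
-/

open CategoryTheory CategoryTheory.Limits Stmt2

namespace Stmt2

variable {A : Type u} [Category.{v} A] [Abelian A]

lemma IdimLE.hasInjectiveDimensionLE :
    ∀ {n : ℕ} {M : A}, IdimLE n M → HasInjectiveDimensionLE M n
  | 0, _, h => injective_iff_hasInjectiveDimensionLT_one.mp h
  | _ + 1, _, .inl h => by have := h; infer_instance
  | n + 1, _, .inr ⟨_, _, _, _, _, hI, hS, hK⟩ => by
    have := hI
    exact hS.hasInjectiveDimensionLT_X₁ (n + 1) hK.hasInjectiveDimensionLE inferInstance

lemma idimLE_of_hasInjectiveDimensionLE [EnoughInjectives A] :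
    ∀ {n : ℕ} {M : A}, HasInjectiveDimensionLE M n → IdimLE n M
  | 0, _, h => injective_iff_hasInjectiveDimensionLT_one.mpr h
  | n + 1, M, h =>
    have hS := ShortComplex.ShortExact.mk' (ShortComplex.exact_cokernel (Injective.ι M))
      inferInstance inferInstance
    .inr ⟨_, _, _, _, _, Injective.injective_under M, hS, idimLE_of_hasInjectiveDimensionLE
      (hS.hasInjectiveDimensionLT_X₃ (n + 1) inferInstance h)⟩

lemma PdimLE.hasProjectiveDimensionLE :
    ∀ {n : ℕ} {M : A}, PdimLE n M → HasProjectiveDimensionLE M n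
  | 0, _, h => projective_iff_hasProjectiveDimensionLT_one.mp h
  | _ + 1, _, .inl h => by have := h; infer_instance
  | n + 1, _, .inr ⟨_, _, _, _, _, hP, hS, hK⟩ => by
    have := hP
    exact hS.hasProjectiveDimensionLT_X₃ (n + 1) hK.hasProjectiveDimensionLE inferInstance

lemma pdimLE_of_hasProjectiveDimensionLE [EnoughProjectives A] :
    ∀ {n : ℕ} {M : A}, HasProjectiveDimensionLE M n → PdimLE n M
  | 0, _, h => projective_iff_hasProjectiveDimensionLT_one.mpr h
  | n + 1, M, h =>
    have hS := ShortComplex.ShortExact.mk' (ShortComplex.exact_kernel (Projective.π M))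
      inferInstance inferInstance
    .inr ⟨_, _, _, _, _, Projective.projective_over M, hS, pdimLE_of_hasProjectiveDimensionLE
      (hS.hasProjectiveDimensionLT_X₁ (n + 1) inferInstance h)⟩

variable {n : ℕ}

lemma _root_.CategoryTheory.ShortComplex.ShortExact.idimLE_X₃ [EnoughInjectives A]
    {S : ShortComplex A} (hS : S.ShortExact) (h₁ : IdimLE n S.X₁) (h₂ : IdimLE n S.X₂) :
    IdimLE n S.X₃ := by
  have := h₁.hasInjectiveDimensionLE
  exact idimLE_of_hasInjectiveDimensionLE
    (hS.hasInjectiveDimensionLT_X₃ (n + 1) h₂.hasInjectiveDimensionLE inferInstance)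

lemma _root_.CategoryTheory.ShortComplex.ShortExact.pdimLE_X₁ [EnoughProjectives A]
    {S : ShortComplex A} (hS : S.ShortExact) (h₂ : PdimLE n S.X₂) (h₃ : PdimLE n S.X₃) :
    PdimLE n S.X₁ := by
  have := h₃.hasProjectiveDimensionLE
  exact pdimLE_of_hasProjectiveDimensionLE
    (hS.hasProjectiveDimensionLT_X₁ (n + 1) h₂.hasProjectiveDimensionLE inferInstance)

lemma idimLE_of_finPdim [EnoughInjectives A] (hproj : ∀ P : A, Projective P → IdimLE n P)
    {M : A} (hM : FinPdim M) : IdimLE n M := by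
  obtain ⟨m, hm⟩ := hM
  induction m generalizing M with
  | zero => exact hproj M hm
  | succ m ih =>
    obtain hM | ⟨K, P, _, _, _, hP, hS, hK⟩ := hm
    · exact hproj M hM
    · exact hS.idimLE_X₃ (ih hK) (hproj P hP)

lemma pdimLE_of_finIdim [EnoughProjectives A] (hinj : ∀ I : A, Injective I → PdimLE n I)
    {M : A} (hM : FinIdim M) : PdimLE n M := by
  obtain ⟨m, hm⟩ := hM
  induction m generalizing M with
  | zero => exact hinj M hm
  | succ m ih =>
    obtain hM | ⟨I, K, _, _, _, hI, hS, hK⟩ := hm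
    · exact hinj M hM
    · exact hS.pdimLE_X₁ (hinj I hI) (ih hK)

end Stmt2

lemma CategoryTheory.IsSeparator.of_epi {C : Type u} [Category.{v} C] {G H : C}
    (hG : IsSeparator G) (π : H ⟶ G) [Epi π] : IsSeparator H := by
  rw [isSeparator_def] at hG ⊢
  intro X Y f g hfg
  exact hG f g fun h => (cancel_epi π).mp (by simpa using hfg (π ≫ h))

theorem gorenstein_criterion_general
    (A : Type u) [Category.{v} A] [Abelian A]
    [HasFilteredColimits A] [AB5 A] [HasSeparator A]
    [EnoughProjectives A] (n : ℕ)
    (hproj : ∀ P : A, Projective P → IdimLE n P)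
    (hinj : ∀ I : A, Injective I → PdimLE n I) :
    IsGorensteinDimLE A n ∧
      (∀ M : A, FinPdim M → IdimLE n M) ∧ (∀ M : A, FinIdim M → PdimLE n M) := by
  have : IsGrothendieckAbelian.{v} A := {}
  have hPI : ∀ M : A, FinPdim M → IdimLE n M := fun _ => idimLE_of_finPdim hproj
  have hIP : ∀ M : A, FinIdim M → PdimLE n M := fun _ => pdimLE_of_finIdim hinj
  have hPP : ∀ M : A, FinPdim M → PdimLE n M := fun M hM => hIP M ⟨n, hPI M hM⟩
  have hII : ∀ M : A, FinIdim M → IdimLE n M := fun M hM => hPI M ⟨n, hIP M hM⟩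
  have hsep : ∃ G : A, IsSeparator G ∧ FinPdim G :=
    ⟨_, (isSeparator_separator A).of_epi (Projective.π _), 0, Projective.projective_over _⟩
  exact ⟨⟨⟨fun M => ⟨fun h => ⟨n, hPI M h⟩, fun h => ⟨n, hIP M h⟩⟩, ⟨n, hPP, hII⟩, hsep⟩,
    hPP, hII⟩, hPI, hIP⟩

/-- Let `A` be a Grothendieck category (abelian, AB5, with a separator)
with enough projectives.  If every projective object has an injective resolution of length
at most `n` and every injective object has a projective resolution of length at most `n`,
then `A` is Gorenstein of Gorenstein dimension at most `n`; in particular every object of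
finite projective dimension has injective dimension at most `n` and every object of finite
injective dimension has projective dimension at most `n`. -/
theorem gorenstein_criterion
    (A : Type u) [Category.{v} A] [Abelian A]
    [HasColimits A] [HasFilteredColimits A] [AB5 A] [HasSeparator A]
    [EnoughProjectives A] (n : ℕ)
    (hproj : ∀ P : A, Projective P → IdimLE n P)
    (hinj : ∀ I : A, Injective I → PdimLE n I) :
    IsGorensteinDimLE A n ∧
      (∀ M : A, FinPdim M → IdimLE n M) ∧ (∀ M : A, FinIdim M → PdimLE n M) :=
  gorenstein_criterion_general A n hproj hinj
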